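/- For any maximal 3-γc-vertex critical graph G of order n, the sum of the independence number and the clique number satisfies α(G) + ω(G) ≤ n − 1. -/

import Mathlib

open Finset

variable {V : Type*}

/-- `D` is a connected dominating set of `G`: every vertex is in `D` or adjacent to a
vertex of `D`, and the subgraph induced by `D` is connected. -/
def IsConnDomSet (G : SimpleGraph V) (D : Set V) : Prop :=
  (∀ v : V, v ∈ D ∨ ∃ u ∈ D, G.Adj u v) ∧ (G.induce D).Connected

/-- The connected domination number `γc(G)`. -/
noncomputable def gammaC (G : SimpleGraph V) [Fintype V] : ℕ :=
  sInf {k | ∃ D : Finset V, D.card = k ∧ IsConnDomSet G ↑D}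

/-- The independence number `α(G)`. -/
noncomputable def alpha (G : SimpleGraph V) [Fintype V] : ℕ :=
  sSup {k | ∃ I : Finset V, I.card = k ∧ (↑I : Set V).Pairwise fun u v => ¬ G.Adj u v}

/-- The clique number `ω(G)`. -/
noncomputable def omegaNum (G : SimpleGraph V) [Fintype V] : ℕ :=
  sSup {k | ∃ W : Finset V, W.card = k ∧ (↑W : Set V).Pairwise G.Adj}

/-- The minimum degree `δ(G)`. -/
noncomputable def minDeg (G : SimpleGraph V) [Fintype V] : ℕ :=
  sInf {k | ∃ v : V, (G.neighborSet v).ncard = k}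

/-- The vertex connectivity `κ(G)`: the minimum size of a set of vertices whose
deletion leaves a graph that is disconnected or has at most one vertex
(so `κ = n - 1` for the complete graph on `n` vertices). -/
noncomputable def kappa (G : SimpleGraph V) [Fintype V] : ℕ :=
  sInf {k | ∃ S : Finset V, S.card = k ∧
    (¬ (G.induce (↑S : Set V)ᶜ).Connected ∨ ((↑S : Set V)ᶜ).Subsingleton)}

/-- `G` is `3`-`γc`-edge critical: `γc(G) = 3` and adding any missing edge decreases `γc`. -/
def EdgeCritical3 (G : SimpleGraph V) [Fintype V] : Prop :=
  gammaC G = 3 ∧ ∀ u v : V, u ≠ v → ¬ G.Adj u v →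
    gammaC (G ⊔ SimpleGraph.fromEdgeSet {s(u, v)}) < 3

/-- `G` is `3`-`γc`-vertex critical: `G` is `2`-connected, `γc(G) = 3` and deleting any
vertex decreases `γc`. -/
def VertexCritical3 (G : SimpleGraph V) [Fintype V] [DecidableEq V] : Prop :=
  2 ≤ kappa G ∧ gammaC G = 3 ∧ ∀ v : V, gammaC (G.induce {w | w ≠ v}) < 3

/-- `G` is maximal `3`-`γc`-vertex critical. -/
def MaximalVertexCritical3 (G : SimpleGraph V) [Fintype V] [DecidableEq V] : Prop :=
  EdgeCritical3 G ∧ VertexCritical3 G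

/-!
Let `I` be a maximum independent set and `C` a maximum clique. They share at most one vertex, so
it suffices to find a vertex outside `I ∪ C`, and two of them when `I ∩ C = {a}`.

Since `γc(G - v) ≤ 2 < γc(G)`, every `G - v` has a dominating edge `st` with `s, t` not adjacent
to `v`. For `v ∈ C` both ends avoid `C` and, being adjacent, are not both in `I`; this gives the
first vertex. For `v = a ∈ I ∩ C` the only remaining case is an edge `xy` with `y ∈ I` and `x` the
unique vertex outside `I ∪ C`. Edge criticality at the non-edge `ax` then makes `x` adjacent to all
of `I - a`, so the non-neighbours of `x` lie in `C` and `C` has a vertex `b ≠ a`. The dominating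
edge of `G - b` lies in `I ∪ {x}`, which contains no neighbour of `a`: a contradiction.
-/

lemma exists_finset_card_eq_sSup [Fintype V] (P : Finset V → Prop) (h₀ : P ∅) :
    ∃ s, P s ∧ s.card = sSup {k | ∃ s : Finset V, s.card = k ∧ P s} := by
  obtain ⟨s, hcard, hs⟩ := Nat.sSup_mem (s := {k | ∃ s : Finset V, s.card = k ∧ P s})
    ⟨0, ∅, rfl, h₀⟩ ⟨Fintype.card V, by rintro k ⟨s, rfl, -⟩; exact s.card_le_univ⟩
  exact ⟨s, hs, hcard⟩

lemma exists_isIndepSet_card_eq_alpha [Fintype V] (G : SimpleGraph V) :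
    ∃ I : Finset V, G.IsIndepSet ↑I ∧ I.card = alpha G :=
  exists_finset_card_eq_sSup _ (by simp)

lemma exists_isClique_card_eq_omegaNum [Fintype V] (G : SimpleGraph V) :
    ∃ C : Finset V, G.IsClique ↑C ∧ C.card = omegaNum G :=
  exists_finset_card_eq_sSup _ (by simp)

lemma induce_compl_connected_of_card_lt_kappa [Fintype V] {G : SimpleGraph V} {S : Finset V}
    (hS : S.card < kappa G) :
    (G.induce (↑S : Set V)ᶜ).Connected ∧ ((↑S : Set V)ᶜ).Nontrivial := by
  by_contra h
  rw [not_and_or, Set.not_nontrivial_iff] at h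
  exact (Nat.sInf_le ⟨S, rfl, h⟩ : kappa G ≤ S.card).not_gt hS

lemma SimpleGraph.IsClique.notMem_of_adj_of_not_adj {G : SimpleGraph V} {C : Set V} {a x y : V}
    (hC : G.IsClique C) (ha : a ∈ C) (hxy : G.Adj x y) (hax : ¬G.Adj a x) (hay : ¬G.Adj a y) :
    x ∉ C := by
  intro hx
  obtain rfl | hxa := eq_or_ne x a
  · exact hay hxy
  · exact hax (hC ha hx hxa.symm)

section Domination

variable {G : SimpleGraph V} {s t w : V}

def PairDominates (G : SimpleGraph V) (s t w : V) : Prop :=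
  w = s ∨ w = t ∨ G.Adj s w ∨ G.Adj t w

lemma PairDominates.symm (h : PairDominates G s t w) : PairDominates G t s w := by
  unfold PairDominates at *
  tauto

lemma gammaC_le_card [Fintype V] {D : Finset V} (hD : IsConnDomSet G ↑D) : gammaC G ≤ D.card :=
  Nat.sInf_le ⟨D, rfl, hD⟩

lemma gammaC_le_two [Fintype V] (hst : G.Adj s t) (hdom : ∀ w, PairDominates G s t w) :
    gammaC G ≤ 2 := by
  classical
  refine (gammaC_le_card (D := {s, t}) ⟨fun w => ?_, ?_⟩).trans card_le_two
  · rcases hdom w with rfl | rfl | h | h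
    · simp
    · simp
    · exact .inr ⟨s, by simp, h⟩
    · exact .inr ⟨t, by simp, h⟩
  · rw [coe_pair]
    exact G.induce_pair_connected_of_adj hst

lemma exists_dominating_edge [Fintype V] [Nontrivial V] (hc : G.Connected) (h : gammaC G < 3) :
    ∃ s t, G.Adj s t ∧ ∀ w, PairDominates G s t w := by
  classical
  have huniv : IsConnDomSet G ↑(univ : Finset V) :=
    ⟨fun v => .inl (mem_univ v), by rw [coe_univ]; exact G.induceUnivIso.connected_iff.mpr hc⟩
  obtain ⟨D, hcard, hdom, hconn⟩ :=
    Nat.sInf_mem (s := {k | ∃ D : Finset V, D.card = k ∧ IsConnDomSet G ↑D})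
      ⟨_, univ, rfl, huniv⟩
  change D.card = gammaC G at hcard
  obtain ⟨⟨z, hz⟩⟩ := hconn.nonempty
  -- `D` is `{z}` or an edge `{z, q}`; in the first case any `q ≠ z` is a neighbour of `z`
  obtain ⟨q, hzq, hD⟩ : ∃ q, G.Adj z q ∧ ∀ u ∈ D, u = z ∨ u = q := by
    by_cases hq : ∃ q ∈ D, q ≠ z
    · obtain ⟨q, hq, hqz⟩ := hq
      have : Nontrivial (↑D : Set V) := ⟨⟨⟨z, hz⟩, ⟨q, hq⟩, by simp [hqz.symm]⟩⟩
      obtain ⟨⟨r, hr⟩, hzr⟩ := hconn.preconnected.exists_adj_of_nontrivial ⟨z, hz⟩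
      have hzr : G.Adj z r := hzr
      have hDzr : D = {z, r} := (eq_of_subset_of_card_le
        (by simp [insert_subset_iff, mem_coe.1 hz, mem_coe.1 hr])
        (by rw [card_pair hzr.ne]; omega)).symm
      exact ⟨r, hzr, by simp [hDzr]⟩
    · push Not at hq
      obtain ⟨q, hqz⟩ := exists_ne z
      refine ⟨q, ?_, fun u hu => .inl (hq u hu)⟩
      rcases hdom q with hqD | ⟨u, hu, huq⟩
      · exact absurd (hq q hqD) hqz
      · rwa [hq u hu] at huq
  refine ⟨z, q, hzq, fun w => ?_⟩
  rcases hdom w with hw | ⟨u, hu, huw⟩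
  · rcases hD w hw with h | h
    · exact .inl h
    · exact .inr (.inl h)
  · rcases hD u hu with rfl | rfl
    · exact .inr (.inr (.inl huw))
    · exact .inr (.inr (.inr huw))

end Domination

section VertexCritical

variable [Fintype V] [DecidableEq V] {G : SimpleGraph V}

lemma VertexCritical3.connected (hG : VertexCritical3 G) : G.Connected := by
  have h := (induce_compl_connected_of_card_lt_kappa (G := G) (S := ∅)
    (by rw [card_empty]; have := hG.1; omega)).1
  rw [coe_empty, Set.compl_empty] at h
  exact G.induceUnivIso.connected_iff.mp h

lemma VertexCritical3.nontrivial (hG : VertexCritical3 G) : Nontrivial V := by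
  have h := (induce_compl_connected_of_card_lt_kappa (G := G) (S := ∅)
    (by rw [card_empty]; have := hG.1; omega)).2
  rwa [coe_empty, Set.compl_empty, Set.nontrivial_univ_iff] at h

lemma VertexCritical3.exists_dominating_edge_off (hG : VertexCritical3 G) (v : V) :
    ∃ s t, G.Adj s t ∧ ¬G.Adj v s ∧ ¬G.Adj v t ∧
      ∀ w, w ≠ v → PairDominates G s t w := by
  obtain ⟨hconn, hnt⟩ := induce_compl_connected_of_card_lt_kappa (G := G) (S := {v})
    (by rw [card_singleton]; have := hG.1; omega)
  rw [coe_singleton, Set.compl_singleton_eq] at hconn hnt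
  have := hnt.coe_sort
  obtain ⟨⟨s, _⟩, ⟨t, _⟩, hst, hdom⟩ := exists_dominating_edge hconn (hG.2.2 v)
  have hdom' : ∀ w, w ≠ v → PairDominates G s t w := fun w hw => by
    simpa [PairDominates, Subtype.ext_iff] using hdom ⟨w, hw⟩
  have hfar : ¬(G.Adj s v ∨ G.Adj t v) := by
    intro hv
    have := gammaC_le_two (G := G) hst fun w => by
      obtain rfl | hw := eq_or_ne w v
      · exact .inr (.inr hv)
      · exact hdom' w hw
    rw [hG.2.1] at this
    omega
  exact ⟨s, t, hst, fun h => hfar (.inl h.symm), fun h => hfar (.inr h.symm), hdom'⟩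

end VertexCritical

section EdgeCritical

open SimpleGraph

variable {G : SimpleGraph V} {u v : V}

lemma adj_of_sup_edge_adj {a b : V} (h : (G ⊔ edge u v).Adj a b) (hab : s(a, b) ≠ s(u, v)) :
    G.Adj a b := by
  rcases h with h | h
  · exact h
  · rw [edge_adj] at h
    rcases h.1 with ⟨rfl, rfl⟩ | ⟨rfl, rfl⟩
    · exact absurd rfl hab
    · exact absurd Sym2.eq_swap hab

lemma PairDominates.of_sup_edge {s t w : V} (h : PairDominates (G ⊔ edge u v) s t w)
    (hs : s(s, w) ≠ s(u, v)) (ht : s(t, w) ≠ s(u, v)) : PairDominates G s t w := by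
  rcases h with h | h | h | h
  · exact .inl h
  · exact .inr (.inl h)
  · exact .inr (.inr (.inl (adj_of_sup_edge_adj h hs)))
  · exact .inr (.inr (.inr (adj_of_sup_edge_adj h ht)))

variable [Fintype V]

lemma cases_of_sup_edge_dominating_edge (hg : gammaC G = 3) (huv : u ≠ v) {t : V}
    (hut : (G ⊔ edge u v).Adj u t) (hdom : ∀ w, PairDominates (G ⊔ edge u v) u t w) :
    (∀ w, PairDominates G u v w) ∨
      ∃ q, G.Adj u q ∧ ¬G.Adj v q ∧ ∀ w, w ≠ v → PairDominates G u q w := by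
  obtain rfl | htv := eq_or_ne t v
  · refine .inl fun w => ?_
    obtain rfl | hwu := eq_or_ne w u
    · exact .inl rfl
    obtain rfl | hwt := eq_or_ne w t
    · exact .inr (.inl rfl)
    · exact (hdom w).of_sup_edge (by rw [Ne, Sym2.eq_iff]; tauto) (by rw [Ne, Sym2.eq_iff]; tauto)
  have htu : t ≠ u := hut.ne.symm
  have hut' : G.Adj u t := adj_of_sup_edge_adj hut (by rw [Ne, Sym2.eq_iff]; tauto)
  have hdom' : ∀ w, w ≠ v → PairDominates G u t w := fun w hwv =>
    (hdom w).of_sup_edge (by rw [Ne, Sym2.eq_iff]; tauto) (by rw [Ne, Sym2.eq_iff]; tauto)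
  refine .inr ⟨t, hut', fun hvt => ?_, hdom'⟩
  have := gammaC_le_two hut' fun w => by
    obtain rfl | hwv := eq_or_ne w v
    · exact .inr (.inr (.inr hvt.symm))
    · exact hdom' w hwv
  omega

lemma EdgeCritical3.dominating_cases (hG : EdgeCritical3 G) (hc : G.Connected) (huv : u ≠ v)
    (hnadj : ¬G.Adj u v) :
    (∀ w, PairDominates G u v w) ∨
      (∃ q, G.Adj u q ∧ ¬G.Adj v q ∧ ∀ w, w ≠ v → PairDominates G u q w) ∨
      (∃ q, G.Adj v q ∧ ¬G.Adj u q ∧ ∀ w, w ≠ u → PairDominates G v q w) := by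
  have := nontrivial_of_ne u v huv
  obtain ⟨s, t, hst, hdom⟩ :=
    exists_dominating_edge (G := G ⊔ edge u v) (hc.mono le_sup_left) (hG.2 u v huv hnadj)
  wlog hs : s = u ∨ s = v generalizing s t
  · by_cases ht : t = u ∨ t = v
    · exact this t s hst.symm (fun w => (hdom w).symm) ht
    have := gammaC_le_two (adj_of_sup_edge_adj hst (by rw [Ne, Sym2.eq_iff]; tauto))
      fun w => (hdom w).of_sup_edge (by rw [Ne, Sym2.eq_iff]; tauto)
        (by rw [Ne, Sym2.eq_iff]; tauto)
    rw [hG.1] at this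
    omega
  rcases hs with rfl | rfl
  · exact (cases_of_sup_edge_dominating_edge hG.1 huv hst hdom).imp_right .inl
  · rw [edge_comm] at hst hdom
    exact (cases_of_sup_edge_dominating_edge hG.1 huv.symm hst hdom).imp
      (fun h w => (h w).symm) .inr

end EdgeCritical

section IndepClique

variable [Fintype V] {G : SimpleGraph V} {I C : Set V} {a x y : V}

lemma gammaC_le_two_of_cover (hI : G.IsIndepSet I) (hC : G.IsClique C) (haI : a ∈ I)
    (hyI : y ∈ I) (hxy : G.Adj x y) (hax : ¬G.Adj a x) (hcover : ∀ w, w ∈ I ∨ w ∈ C ∨ w = x)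
    {q : V} (haq : G.Adj a q) (hdom : ∀ w, w ≠ x → PairDominates G a q w) : gammaC G ≤ 2 := by
  have hxI : x ∉ I := fun hxI => hI hxI hyI hxy.ne hxy
  have hqI : q ∉ I := fun hqI => hI haI hqI haq.ne haq
  have hqC : q ∈ C := ((hcover q).resolve_left hqI).resolve_right (by rintro rfl; exact hax haq)
  have hya : y ≠ a := by rintro rfl; exact hax hxy.symm
  have hqy : G.Adj q y := by
    rcases hdom y hxy.ne.symm with h | h | h | h
    · exact absurd h hya
    · exact absurd (h ▸ hyI) hqI
    · exact absurd h (hI haI hyI hya.symm)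
    · exact h
  refine gammaC_le_two hqy fun w => ?_
  rcases hcover w with hwI | hwC | rfl
  · obtain rfl | hwa := eq_or_ne w a
    · exact .inr (.inr (.inl haq.symm))
    rcases hdom w (fun h => hxI (h ▸ hwI)) with h | h | h | h
    · exact absurd h hwa
    · exact absurd (h ▸ hwI) hqI
    · exact absurd h (hI haI hwI hwa.symm)
    · exact .inr (.inr (.inl h))
  · obtain rfl | hwq := eq_or_ne w q
    · exact .inl rfl
    · exact .inr (.inr (.inl (hC hqC hwC hwq.symm)))
  · exact .inr (.inr (.inr hxy.symm))

lemma EdgeCritical3.adj_of_mem_indepSet (hG : EdgeCritical3 G) (hc : G.Connected)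
    (hI : G.IsIndepSet I) (hC : G.IsClique C) (haI : a ∈ I) (haC : a ∈ C) (hyI : y ∈ I)
    (hxy : G.Adj x y) (hax : ¬G.Adj a x) (hcover : ∀ w, w ∈ I ∨ w ∈ C ∨ w = x)
    {z : V} (hzI : z ∈ I) (hza : z ≠ a) : G.Adj x z := by
  have hxI : x ∉ I := fun hxI => hI hxI hyI hxy.ne hxy
  have hxa : x ≠ a := fun h => hxI (h ▸ haI)
  rcases hG.dominating_cases hc hxa.symm hax with
    hA | ⟨q, haq, -, hdom⟩ | ⟨q, hxq, haq, hdom⟩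
  · rcases hA z with rfl | rfl | h | h
    · exact absurd rfl hza
    · exact absurd hzI hxI
    · exact absurd h (hI haI hzI hza.symm)
    · exact h
  · have := gammaC_le_two_of_cover hI hC haI hyI hxy hax hcover haq hdom
    rw [hG.1] at this
    omega
  · have hqI : q ∈ I := by
      rcases hcover q with hqI | hqC | rfl
      · exact hqI
      · exact absurd (hC haC hqC (by rintro rfl; exact hax hxq.symm)) haq
      · exact absurd hxq G.irrefl
    obtain rfl | hzq := eq_or_ne z q
    · exact hxq
    rcases hdom z hza with rfl | rfl | h | h
    · exact absurd hzI hxI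
    · exact absurd rfl hzq
    · exact h
    · exact absurd h (hI hqI hzI hzq.symm)

variable [DecidableEq V]

lemma MaximalVertexCritical3.false_of_forall_mem_or_eq (hG : MaximalVertexCritical3 G)
    (hI : G.IsIndepSet I) (hC : G.IsClique C) (haI : a ∈ I) (haC : a ∈ C) (hyI : y ∈ I)
    (hxy : G.Adj x y) (hax : ¬G.Adj a x) (hcover : ∀ w, w ∈ I ∨ w ∈ C ∨ w = x) :
    False := by
  have hnonadj : ∀ r, r ≠ x → ¬G.Adj x r → r ∈ C := fun r hrx hxr => by
    rcases hcover r with hrI | hrC | rfl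
    · obtain rfl | hra := eq_or_ne r a
      · exact haC
      · exact absurd (hG.1.adj_of_mem_indepSet hG.2.connected hI hC haI haC hyI hxy hax hcover
          hrI hra) hxr
    · exact hrC
    · exact absurd rfl hrx
  obtain ⟨s, t, hst, hxs, hxt, -⟩ := hG.2.exists_dominating_edge_off x
  have hsC := hnonadj s (by rintro rfl; exact hxt hst) hxs
  have htC := hnonadj t (by rintro rfl; exact hxs hst.symm) hxt
  obtain ⟨b, hbC, hba⟩ : ∃ b ∈ C, b ≠ a := by
    obtain rfl | hsa := eq_or_ne s a
    · exact ⟨t, htC, hst.ne.symm⟩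
    · exact ⟨s, hsC, hsa⟩
  have hfar : ∀ r ∉ C, ¬G.Adj r a := fun r hrC => by
    rcases hcover r with hrI | hrC' | rfl
    · obtain rfl | hra := eq_or_ne r a
      · exact G.irrefl
      · exact hI hrI haI hra
    · exact absurd hrC' hrC
    · exact fun h => hax h.symm
  obtain ⟨p, q, hpq, hbp, hbq, hdom⟩ := hG.2.exists_dominating_edge_off b
  have hpC : p ∉ C := hC.notMem_of_adj_of_not_adj hbC hpq hbp hbq
  have hqC : q ∉ C := hC.notMem_of_adj_of_not_adj hbC hpq.symm hbq hbp
  rcases hdom a hba.symm with rfl | rfl | h | h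
  · exact hfar q hqC hpq.symm
  · exact hfar p hpC hpq
  · exact hfar p hpC h
  · exact hfar q hqC h

lemma VertexCritical3.exists_notMem_union (hG : VertexCritical3 G) (hI : G.IsIndepSet I)
    (hC : G.IsClique C) : ∃ x, x ∉ I ∪ C := by
  by_contra! hcover
  have := hG.nontrivial
  obtain ⟨v⟩ : Nonempty V := inferInstance
  obtain ⟨s, t, hst, -⟩ := hG.exists_dominating_edge_off v
  obtain ⟨a, haC⟩ : ∃ a, a ∈ C := by
    rcases hcover s with hsI | hsC
    · rcases hcover t with htI | htC
      · exact absurd hst (hI hsI htI hst.ne)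
      · exact ⟨t, htC⟩
    · exact ⟨s, hsC⟩
  obtain ⟨x, y, hxy, hax, hay, -⟩ := hG.exists_dominating_edge_off a
  have hxI := (hcover x).resolve_right (hC.notMem_of_adj_of_not_adj haC hxy hax hay)
  have hyI := (hcover y).resolve_right (hC.notMem_of_adj_of_not_adj haC hxy.symm hay hax)
  exact hI hxI hyI hxy.ne hxy

lemma MaximalVertexCritical3.exists_ne_notMem_union (hG : MaximalVertexCritical3 G)
    (hI : G.IsIndepSet I) (hC : G.IsClique C) (haI : a ∈ I) (haC : a ∈ C) :
    ∃ x y, x ≠ y ∧ x ∉ I ∪ C ∧ y ∉ I ∪ C := by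
  obtain ⟨x, y, hxy, hax, hay, -⟩ := hG.2.exists_dominating_edge_off a
  have hxC := hC.notMem_of_adj_of_not_adj haC hxy hax hay
  have hyC := hC.notMem_of_adj_of_not_adj haC hxy.symm hay hax
  have hsecond : ∀ {x y}, G.Adj x y → ¬G.Adj a x → y ∈ I →
      ∃ z, z ≠ x ∧ z ∉ I ∪ C := by
    intro x y hxy hax hyI
    by_contra! h
    refine hG.false_of_forall_mem_or_eq hI hC haI haC hyI hxy hax fun w => ?_
    by_cases hwx : w = x
    · exact .inr (.inr hwx)
    · exact (h w hwx).imp_right .inl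
  by_cases hxI : x ∈ I
  · obtain ⟨z, hzy, hz⟩ := hsecond hxy.symm hay hxI
    exact ⟨z, y, hzy, hz, fun h => h.elim (fun hyI => hI hxI hyI hxy.ne hxy) hyC⟩
  by_cases hyI : y ∈ I
  · obtain ⟨z, hzx, hz⟩ := hsecond hxy hax hyI
    exact ⟨z, x, hzx, hz, fun h => h.elim hxI hxC⟩
  · exact ⟨x, y, hxy.ne, fun h => h.elim hxI hxC, fun h => h.elim hyI hyC⟩

lemma MaximalVertexCritical3.card_inter_lt_card_compl_union (hG : MaximalVertexCritical3 G)
    {I C : Finset V} (hI : G.IsIndepSet ↑I) (hC : G.IsClique ↑C) :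
    #(I ∩ C) < #(I ∪ C)ᶜ := by
  rcases (I ∩ C).eq_empty_or_nonempty with hIC | ⟨a, haIC⟩
  · obtain ⟨x, hx⟩ := hG.2.exists_notMem_union hI hC
    rw [hIC, card_empty, card_pos]
    exact ⟨x, by simpa using hx⟩
  have hle : #(I ∩ C) ≤ 1 := card_le_one.mpr fun p hp q hq => by
    by_contra hpq
    simp only [mem_inter] at hp hq
    exact hI hp.1 hq.1 hpq (hC hp.2 hq.2 hpq)
  rw [mem_inter] at haIC
  obtain ⟨x, y, hxy, hx, hy⟩ := hG.exists_ne_notMem_union hI hC haIC.1 haIC.2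
  have hsub : {x, y} ⊆ (I ∪ C)ᶜ := by
    simp only [insert_subset_iff, singleton_subset_iff, mem_compl, mem_union]
    exact ⟨hx, hy⟩
  calc #(I ∩ C) ≤ 1 := hle
    _ < #{x, y} := by rw [card_pair hxy]; omega
    _ ≤ #(I ∪ C)ᶜ := card_le_card hsub

end IndepClique

/-- every maximal `3`-`γc`-vertex critical graph of order `n` satisfies
`α(G) + ω(G) ≤ n - 1`. -/
theorem stmt_7 (G : SimpleGraph V) [Fintype V] [DecidableEq V]
    (h : MaximalVertexCritical3 G) :
    alpha G + omegaNum G ≤ Fintype.card V - 1 := by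
  obtain ⟨I, hI, hIcard⟩ := exists_isIndepSet_card_eq_alpha G
  obtain ⟨C, hC, hCcard⟩ := exists_isClique_card_eq_omegaNum G
  have hlt := h.card_inter_lt_card_compl_union hI hC
  have hunion := card_union_add_card_inter I C
  have hcompl := card_add_card_compl (I ∪ C)
  omega
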